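/- Let d be a positive integer, let Box ⊆ ℝ^d be a full-dimensional lattice polytope with 0 in its interior, let j ∈ {1,…,d} and α > 0 be such that the point v = α·e_j (e_j the j-th standard basis vector) satisfies v ∈ Box and −v ∈ Box, and let f be an integral concave piecewise-affine function on Box which is at height one and satisfies f(0) > 0. Then: (1) if f(0) < 1 (i.e., f is non-integral), then f(−v) + f(v) ≤ 1; (2) if f(0) = 1 (i.e., f is integral) and the restriction of f to the segment from −v to v is not affine, then f(−v) + f(v) ≤ 2 − α; (3) if f(0) = 1 and the restriction of f to the segment from −v to v is affine, then f(−v) + f(v) = 2. -/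

import Mathlib

open scoped BigOperators

noncomputable section

/-- Embedding of a lattice point of `ℤ^d × ℤ` into `ℝ^d × ℝ`. -/
def latticeEmbed (d : ℕ) (p : (Fin d → ℤ) × ℤ) : (Fin d → ℝ) × ℝ :=
  (fun i => (p.1 i : ℝ), (p.2 : ℝ))

/-- `Box ⊆ ℝ^d` is a lattice polytope: the convex hull of a finite set of lattice points. -/
def IsLatticePolytope (d : ℕ) (Box : Set (Fin d → ℝ)) : Prop :=
  ∃ S : Finset (Fin d → ℤ),
    Box = convexHull ℝ ((fun v : Fin d → ℤ => fun i => (v i : ℝ)) '' (S : Set (Fin d → ℤ)))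

/-- The pairing of `x ∈ ℝ^d` with an integral vector `u ∈ ℤ^d`. -/
def dotZ (d : ℕ) (x : Fin d → ℝ) (u : Fin d → ℤ) : ℝ := ∑ i, x i * (u i : ℝ)

/-- `f` is an integral concave piecewise-affine function on `Box`: there is a finite set
`S ⊆ ℤ^d × ℤ` such that `Box` is the projection of `conv S` and `f x` is the largest `t`
with `(x, t) ∈ conv S`. -/
def IsICPA (d : ℕ) (Box : Set (Fin d → ℝ)) (f : (Fin d → ℝ) → ℝ) : Prop :=
  ∃ S : Finset ((Fin d → ℤ) × ℤ),
    Prod.fst '' (convexHull ℝ (latticeEmbed d '' (S : Set ((Fin d → ℤ) × ℤ)))) = Box ∧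
    ∀ x ∈ Box,
      IsGreatest {t : ℝ | (x, t) ∈ convexHull ℝ (latticeEmbed d '' (S : Set ((Fin d → ℤ) × ℤ)))}
        (f x)

/-- Every facet of the graph of `f` lies at height one. -/
def AtHeightOne (d : ℕ) (Box : Set (Fin d → ℝ)) (f : (Fin d → ℝ) → ℝ) : Prop :=
  ∀ x ∈ Box, ∃ (u : Fin d → ℤ) (m : ℤ),
    |dotZ d x u + (m : ℝ) * f x| = 1 ∧
    ∀ y ∈ Box, dotZ d y u + (m : ℝ) * f y ≤ dotZ d x u + (m : ℝ) * f x

/-- A combinatorial divisorial polytope (CDP) with base in `ℝ^d`. -/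
structure CDP (d : ℕ) where
  box : Set (Fin d → ℝ)
  funcs : List ((Fin d → ℝ) → ℝ)
  lattice : IsLatticePolytope d box
  fullDim : (interior box).Nonempty
  icpa : ∀ f ∈ funcs, IsICPA d box f
  posSum : ∀ x ∈ interior box, 0 < (funcs.map (fun f => f x)).sum

/-- Two functions agree on a set. -/
def EqOnBox (d : ℕ) (B : Set (Fin d → ℝ)) (f g : (Fin d → ℝ) → ℝ) : Prop :=
  ∀ x ∈ B, f x = g x

/-- Move (i): addition of the zero function. -/
def MoveZero (d : ℕ) (P Q : CDP d) : Prop :=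
  Q.box = P.box ∧
    List.Forall₂ (EqOnBox d P.box) Q.funcs (P.funcs ++ [fun _ => (0 : ℝ)])

/-- Move (ii): permutation of the functions. -/
def MovePerm (d : ℕ) (P Q : CDP d) : Prop :=
  Q.box = P.box ∧ ∃ L, List.Perm L P.funcs ∧ List.Forall₂ (EqOnBox d P.box) Q.funcs L

/-- Move (iii): integral affine transformation of the base. -/
def MoveAffine (d : ℕ) (P Q : CDP d) : Prop :=
  ∃ (A B : Matrix (Fin d) (Fin d) ℤ) (t : Fin d → ℤ),
    A * B = 1 ∧ B * A = 1 ∧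
    Q.box = (fun x : Fin d → ℝ => fun i => (∑ j, (A i j : ℝ) * x j) + (t i : ℝ)) '' P.box ∧
    List.Forall₂ (EqOnBox d Q.box) Q.funcs
      (P.funcs.map (fun f => f ∘ fun x : Fin d → ℝ => fun i => ∑ j, (B i j : ℝ) * (x j - (t j : ℝ))))

/-- Move (iv): translation by integers summing to zero. -/
def MoveTranslate (d : ℕ) (P Q : CDP d) : Prop :=
  Q.box = P.box ∧ ∃ α : List ℤ, α.length = P.funcs.length ∧ α.sum = 0 ∧
    List.Forall₂ (EqOnBox d P.box) Q.funcs
      (List.zipWith (fun f (a : ℤ) => fun x => f x + (a : ℝ)) P.funcs α)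

/-- Move (v): shearing by a covector with integral coefficients summing to zero. -/
def MoveShear (d : ℕ) (P Q : CDP d) : Prop :=
  Q.box = P.box ∧ ∃ (v : Fin d → ℤ) (β : List ℤ), β.length = P.funcs.length ∧ β.sum = 0 ∧
    List.Forall₂ (EqOnBox d P.box) Q.funcs
      (List.zipWith (fun f (b : ℤ) => fun x => f x + (b : ℝ) * dotZ d x v) P.funcs β)

/-- One elementary move between CDPs. -/
def CDPMove (d : ℕ) (P Q : CDP d) : Prop :=
  MoveZero d P Q ∨ MovePerm d P Q ∨ MoveAffine d P Q ∨ MoveTranslate d P Q ∨ MoveShear d P Q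

/-- Equivalence of CDPs: the smallest equivalence relation generated by the moves. -/
def CDPEquiv (d : ℕ) : CDP d → CDP d → Prop := Relation.EqvGen (CDPMove d)

/-- The on-the-nose Fano conditions for a CDP. -/
def IsFanoWitness (d : ℕ) (P : CDP d) : Prop :=
  ∃ a : List ℤ, a.sum = -2 ∧
    (0 : Fin d → ℝ) ∈ interior P.box ∧
    List.Forall₂ (fun f (ai : ℤ) =>
      AtHeightOne d P.box (fun x => f x + (ai : ℝ) + 1) ∧ 0 < f 0 + (ai : ℝ) + 1)
      P.funcs a ∧
    ∀ x ∈ frontier P.box,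
      (P.funcs.map (fun f => f x)).sum = 0 ∨
      ∃ u : Fin d → ℤ, dotZ d x u = 1 ∧ ∀ y ∈ P.box, dotZ d y u ≤ 1

/-- A CDP is Fano if it is equivalent to one satisfying the Fano conditions. -/
def IsFano (d : ℕ) (P : CDP d) : Prop := ∃ Q : CDP d, CDPEquiv d P Q ∧ IsFanoWitness d Q

/-- A CDP is toric if it is equivalent to one with at most two functions. -/
def IsToric (d : ℕ) (P : CDP d) : Prop := ∃ Q : CDP d, CDPEquiv d P Q ∧ Q.funcs.length ≤ 2

/-- `f` agrees on `Box` with an affine function with integral slope and constant. -/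
def IsIntegralAffineOn (d : ℕ) (Box : Set (Fin d → ℝ)) (f : (Fin d → ℝ) → ℝ) : Prop :=
  ∃ (u : Fin d → ℤ) (c : ℤ), ∀ x ∈ Box, f x = dotZ d x u + (c : ℝ)

/-- Normalized Fano data on `Box`: the translated functions `Ψᵢ' = Ψᵢ + aᵢ + 1` of a
normalized Fano CDP. -/
def NormalizedFanoData (d n : ℕ) (Box : Set (Fin d → ℝ))
    (f : Fin n → (Fin d → ℝ) → ℝ) : Prop :=
  (∀ i, IsICPA d Box (f i)) ∧
  (∀ i, AtHeightOne d Box (f i)) ∧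
  (∀ i, 0 < f i 0) ∧
  (∀ i, ¬ IsIntegralAffineOn d Box (f i)) ∧
  (∀ x ∈ Box, (n : ℝ) - 2 ≤ ∑ i, f i x) ∧
  (∀ x ∈ interior Box, (n : ℝ) - 2 < ∑ i, f i x) ∧
  (∀ x ∈ frontier Box,
    (∑ i, f i x) = (n : ℝ) - 2 ∨
    ∃ u : Fin d → ℤ, dotZ d x u = 1 ∧ ∀ y ∈ Box, dotZ d y u ≤ 1)

/-- `α_v = min{1, max{α ≥ 0 : ±αv ∈ Box}}`. -/
def alphaV (d : ℕ) (Box : Set (Fin d → ℝ)) (v : Fin d → ℤ) : ℝ :=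
  min 1 (sSup {α : ℝ | 0 ≤ α ∧ (fun i => α * (v i : ℝ)) ∈ Box ∧
    (fun i => -(α * (v i : ℝ))) ∈ Box})

/-- A primitive integral vector: the gcd of its coordinates is 1. -/
def IsPrimitive (d : ℕ) (v : Fin d → ℤ) : Prop := Finset.univ.gcd v = 1

/-- `f` restricted to `Box ∩ ℝ·v` is affine. -/
def AffineOnLine (d : ℕ) (Box : Set (Fin d → ℝ)) (v : Fin d → ℤ)
    (f : (Fin d → ℝ) → ℝ) : Prop :=
  ∃ s c : ℝ, ∀ t : ℝ, (fun i => t * (v i : ℝ)) ∈ Box →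
    f (fun i => t * (v i : ℝ)) = s * t + c

/-- The interval `[a,b]` as a subset of `ℝ¹ = (Fin 1 → ℝ)`. -/
def intervalBox (a b : ℤ) : Set (Fin 1 → ℝ) := {p : Fin 1 → ℝ | (a : ℝ) ≤ p 0 ∧ p 0 ≤ (b : ℝ)}

/-- The `d`-dimensional cross polytope `conv{±e₁, …, ±e_d}`. -/
def crossPolytope (d : ℕ) : Set (Fin d → ℝ) :=
  convexHull ℝ {x : Fin d → ℝ | ∃ j : Fin d, x = Pi.single j 1 ∨ x = -Pi.single j 1}

/-!
Restrict `f` to the segment, `g t = f (t • e_j)` for `|t| ≤ α`. Then `g` is concave, and height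
one gives at each `t` integers `a, m` with `s a + m g s ≤ t a + m g t = ±1` for all `s`.

If `f 0 < 1`, height one at `0` says `|m| f 0 = 1`, which forces `f 0 ≤ 1/2`; concavity gives
`g (-α) + g α ≤ 2 g 0 ≤ 1`.

If `f 0 = 1`, comparing with `s = 0` leaves `m ≤ 0` or `m = 1`. For `m ≤ 0` the convex function
`s a + m g s` has an interior maximum, so it is constant and `g` is affine. So every interior
point has a supporting line `1 - k s` with `k ∈ ℤ`, and the slope is the same for all points on
one side of `0`: `k₋ ≤ k₊`. If `k₋ = k₊`, closedness of `conv S` extends `g = 1 - k s` to the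
endpoints, and `g` is affine. Otherwise `k₊ ≥ k₋ + 1` and
`g (-α) + g α ≤ (1 + k₋ α) + (1 - k₊ α) ≤ 2 - α`.
-/
open Set Filter Topology

theorem ConvexOn.eq_of_isMaxOn_of_mem_Ioo {𝕜 β : Type*} [Field 𝕜] [LinearOrder 𝕜]
    [IsStrictOrderedRing 𝕜] [AddCommMonoid β] [LinearOrder β] [IsOrderedCancelAddMonoid β]
    [Module 𝕜 β] [PosSMulStrictMono 𝕜 β] {φ : 𝕜 → β} {a b t : 𝕜}
    (hφ : ConvexOn 𝕜 (Icc a b) φ) (ht : t ∈ Ioo a b) (hmax : IsMaxOn φ (Icc a b) t) :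
    ∀ s ∈ Icc a b, φ s = φ t := by
  intro s hs
  have ha : a ∈ Icc a b := left_mem_Icc.mpr (ht.1.trans ht.2).le
  have hb : b ∈ Icc a b := right_mem_Icc.mpr (ht.1.trans ht.2).le
  refine le_antisymm (isMaxOn_iff.mp hmax s hs) ?_
  rcases le_total s t with hst | hts
  · exact hφ.le_left_of_right_le'' hs hb hst ht.2 (isMaxOn_iff.mp hmax b hb)
  · exact hφ.le_right_of_left_le'' ha hs ht.1 hts (isMaxOn_iff.mp hmax a ha)

def IsUpperEnvelope {E : Type*} (K : Set (E × ℝ)) (s : Set E) (f : E → ℝ) : Prop :=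
  ∀ x ∈ s, IsGreatest {t | (x, t) ∈ K} (f x)

namespace IsUpperEnvelope

variable {E : Type*} {K : Set (E × ℝ)} {s : Set E} {f : E → ℝ}

theorem concaveOn [AddCommGroup E] [Module ℝ E] (hf : IsUpperEnvelope K s f)
    (hK : Convex ℝ K) (hs : Convex ℝ s) : ConcaveOn ℝ s f :=
  ⟨hs, fun x hx y hy a b ha hb hab => (hf _ (hs hx hy ha hb hab)).2 <| by
    simpa using hK (hf x hx).1 (hf y hy).1 ha hb hab⟩

theorem le_of_tendsto [TopologicalSpace E] {ι : Type*} {l : Filter ι} [l.NeBot]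
    (hf : IsUpperEnvelope K s f) (hK : IsClosed K) {x : ι → E} {x₀ : E} {c : ℝ}
    (hx₀ : x₀ ∈ s) (hxs : ∀ᶠ i in l, x i ∈ s) (hx : Tendsto x l (𝓝 x₀))
    (hfx : Tendsto (fun i => f (x i)) l (𝓝 c)) : c ≤ f x₀ :=
  (hf x₀ hx₀).2 <| hK.mem_of_tendsto (hx.prodMk_nhds hfx) (hxs.mono fun _ hi => (hf _ hi).1)

end IsUpperEnvelope

namespace IsICPA

variable {d : ℕ} {Box : Set (Fin d → ℝ)} {f : (Fin d → ℝ) → ℝ}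

theorem exists_isUpperEnvelope (hf : IsICPA d Box f) :
    ∃ K : Set ((Fin d → ℝ) × ℝ), Convex ℝ K ∧ IsClosed K ∧ Prod.fst '' K = Box ∧
      IsUpperEnvelope K Box f := by
  obtain ⟨S, hproj, hmax⟩ := hf
  exact ⟨_, convex_convexHull ℝ _, (S.finite_toSet.image _).isClosed_convexHull (𝕜 := ℝ),
    hproj, hmax⟩

theorem concaveOn (hf : IsICPA d Box f) : ConcaveOn ℝ Box f := by
  obtain ⟨K, hKconv, -, rfl, hK⟩ := hf.exists_isUpperEnvelope
  exact hK.concaveOn hKconv (hKconv.linear_image (LinearMap.fst ℝ _ ℝ))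

theorem le_of_tendsto {ι : Type*} {l : Filter ι} [l.NeBot] (hf : IsICPA d Box f)
    {x : ι → Fin d → ℝ} {x₀ : Fin d → ℝ} {c : ℝ} (hx₀ : x₀ ∈ Box) (hxs : ∀ᶠ i in l, x i ∈ Box)
    (hx : Tendsto x l (𝓝 x₀)) (hfx : Tendsto (fun i => f (x i)) l (𝓝 c)) : c ≤ f x₀ := by
  obtain ⟨K, -, hKclosed, -, hK⟩ := hf.exists_isUpperEnvelope
  exact hK.le_of_tendsto hKclosed hx₀ hxs hx hfx

end IsICPA

theorem dotZ_single {d : ℕ} (j : Fin d) (t : ℝ) (u : Fin d → ℤ) :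
    dotZ d (Pi.single j t) u = t * u j := by
  simp [dotZ, Pi.single_apply]

section Line

variable {d : ℕ} {Box : Set (Fin d → ℝ)} {f : (Fin d → ℝ) → ℝ} {j : Fin d}

theorem Convex.Icc_subset_setOf_single_mem (hBox : Convex ℝ Box) {α : ℝ}
    (hv : Pi.single j α ∈ Box) (hv' : -Pi.single j α ∈ Box) :
    Icc (-α) α ⊆ {t : ℝ | Pi.single j t ∈ Box} := by
  have hconv := hBox.linear_preimage (LinearMap.single ℝ (fun _ : Fin d => ℝ) j)
  rw [← Pi.single_neg] at hv'
  exact Icc_subset_uIcc.trans (segment_eq_uIcc (-α) α ▸ hconv.segment_subset hv' hv)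

theorem AtHeightOne.restrict_single (hf : AtHeightOne d Box f) {I : Set ℝ}
    (hI : I ⊆ {t : ℝ | Pi.single j t ∈ Box}) {t : ℝ} (ht : t ∈ I) :
    ∃ a m : ℤ, |t * a + m * f (Pi.single j t)| = 1 ∧
      ∀ s ∈ I, s * a + m * f (Pi.single j s) ≤ t * a + m * f (Pi.single j t) := by
  obtain ⟨u, m, habs, hmax⟩ := hf _ (hI ht)
  refine ⟨u j, m, by rwa [dotZ_single] at habs, fun s hs => ?_⟩
  simpa only [dotZ_single] using hmax _ (hI hs)

theorem IsICPA.le_of_tendsto_single (hf : IsICPA d Box f) {I : Set ℝ}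
    (hI : I ⊆ {t : ℝ | Pi.single j t ∈ Box}) {x c : ℝ} (hx : x ∈ closure I)
    (hxB : Pi.single j x ∈ Box)
    (h : Tendsto (fun t => f (Pi.single j t)) (𝓝[I] x) (𝓝 c)) : c ≤ f (Pi.single j x) :=
  haveI := mem_closure_iff_nhdsWithin_neBot.mp hx
  hf.le_of_tendsto hxB (eventually_nhdsWithin_of_forall hI)
    (continuous_single j).continuousWithinAt.tendsto h

end Line

theorem le_half_of_abs_intCast_mul_eq_one {x : ℝ} {m : ℤ} (hm : |m * x| = 1) (hx : x < 1) :
    x ≤ 1 / 2 := by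
  by_contra! hx'
  rw [abs_mul, abs_of_pos (a := x) (by linarith)] at hm
  have h1 : (1 : ℝ) < ((|m| : ℤ) : ℝ) := by
    rw [Int.cast_abs]
    nlinarith [abs_nonneg (m : ℝ)]
  have h2 : ((|m| : ℤ) : ℝ) < 2 := by
    rw [Int.cast_abs]
    nlinarith
  have : 1 < |m| ∧ |m| < 2 := ⟨by exact_mod_cast h1, by exact_mod_cast h2⟩
  omega

theorem slope_eq_of_supporting_lines {k k' t t' y y' : ℝ} (hy : y = 1 - k * t)
    (hy' : y' = 1 - k' * t') (hyk' : y ≤ 1 - k' * t) (hy'k : y' ≤ 1 - k * t')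
    (htt' : 0 < t * t') : k = k' := by
  have h1 : 0 ≤ (k - k') * t := by linarith
  have h2 : 0 ≤ (k' - k) * t' := by linarith
  have h3 : (k - k') ^ 2 * (t * t') ≤ 0 := by nlinarith [mul_nonneg h1 h2]
  have h4 : (k - k') ^ 2 = 0 :=
    le_antisymm (nonpos_of_mul_nonpos_left h3 htt') (sq_nonneg _)
  exact sub_eq_zero.mp (pow_eq_zero_iff two_ne_zero |>.mp h4)

section Segment

variable {g : ℝ → ℝ} {α : ℝ}

theorem add_le_one_of_lt_one (hg : ConcaveOn ℝ (Icc (-α) α) g) (hα : 0 ≤ α) {m : ℤ}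
    (hm : |m * g 0| = 1) (hg0 : g 0 < 1) : g (-α) + g α ≤ 1 := by
  have hmid := hg.2 (⟨le_rfl, by linarith⟩ : -α ∈ Icc (-α) α) ⟨by linarith, le_rfl⟩
    (by norm_num : (0 : ℝ) ≤ 1 / 2) (by norm_num : (0 : ℝ) ≤ 1 / 2) (by norm_num)
  rw [show (1 / 2 : ℝ) • -α + (1 / 2 : ℝ) • α = 0 by simp, smul_eq_mul, smul_eq_mul] at hmid
  linarith [le_half_of_abs_intCast_mul_eq_one hm hg0]

theorem supporting_line_of_height_one (hg : ConcaveOn ℝ (Icc (-α) α) g) (hg0 : g 0 = 1)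
    (hna : ¬∃ s c : ℝ, ∀ t ∈ Icc (-α) α, g t = s * t + c) {t : ℝ} (ht : t ∈ Ioo (-α) α)
    {a m : ℤ} (habs : |t * a + m * g t| = 1)
    (hmax : ∀ s ∈ Icc (-α) α, s * a + m * g s ≤ t * a + m * g t) :
    g t = 1 - a * t ∧ ∀ s ∈ Icc (-α) α, g s ≤ 1 - a * s := by
  have h0 : (0 : ℝ) ∈ Icc (-α) α := ⟨by linarith [ht.1, ht.2], by linarith [ht.1, ht.2]⟩
  have hm_le : (m : ℝ) ≤ t * a + m * g t := by simpa [hg0] using hmax 0 h0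
  have hle_one : t * a + m * g t ≤ 1 := (le_abs_self _).trans habs.le
  rcases le_or_gt m 0 with hm | hpos
  · have hφ : ConvexOn ℝ (Icc (-α) α) (fun s => s * a + m * g s) :=
      ((LinearMap.mulRight ℝ (a : ℝ)).convexOn (convex_Icc _ _)).add
        (hg.neg.smul (c := -(m : ℝ)) (by simpa using hm)) |>.congr fun s _ => by simp
    have hconst := hφ.eq_of_isMaxOn_of_mem_Ioo ht (isMaxOn_iff.mpr hmax)
    rcases hm.lt_or_eq with hneg | hzero
    · refine absurd ⟨-a / m, (t * a + m * g t) / m, fun s hs => ?_⟩ hna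
      have hm' : (m : ℝ) ≠ 0 := by exact_mod_cast hneg.ne
      field_simp
      linarith [hconst s hs]
    · have h := hconst 0 h0
      simp only [hzero, Int.cast_zero, zero_mul, add_zero] at h habs
      rw [← h, abs_zero] at habs
      exact absurd habs zero_ne_one
  · have hm1 : (m : ℝ) = 1 := by
      have : (1 : ℝ) ≤ m := by exact_mod_cast hpos
      linarith
    rw [hm1] at hm_le hmax hle_one
    refine ⟨by linarith, fun s hs => ?_⟩
    linarith [hmax s hs]

theorem add_le_two_sub_of_not_affine (hα : 0 < α)
    (hsupp : ∀ t ∈ Ioo (-α) α,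
      ∃ k : ℤ, g t = 1 - k * t ∧ ∀ s ∈ Icc (-α) α, g s ≤ 1 - k * s)
    (hlim : ∀ x ∈ Icc (-α) α, ∀ c, Tendsto g (𝓝[Ioo (-α) α] x) (𝓝 c) → c ≤ g x)
    (hna : ¬∃ s c : ℝ, ∀ t ∈ Icc (-α) α, g t = s * t + c) :
    g (-α) + g α ≤ 2 - α := by
  have hIoo : Ioo (-α) α ⊆ Icc (-α) α := Ioo_subset_Icc_self
  obtain ⟨kp, hkp, hkp_le⟩ := hsupp (α / 2) ⟨by linarith, by linarith⟩
  obtain ⟨km, hkm, hkm_le⟩ := hsupp (-(α / 2)) ⟨by linarith, by linarith⟩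
  have hright : ∀ t ∈ Ioo 0 α, g t = 1 - kp * t := by
    intro t ht
    obtain ⟨k, hk, hk_le⟩ := hsupp t ⟨by linarith [ht.1], ht.2⟩
    rw [hk, slope_eq_of_supporting_lines hk hkp (hkp_le t (hIoo ⟨by linarith [ht.1], ht.2⟩))
      (hk_le _ (hIoo ⟨by linarith, by linarith⟩)) (by nlinarith [ht.1])]
  have hleft : ∀ t ∈ Ioo (-α) 0, g t = 1 - km * t := by
    intro t ht
    obtain ⟨k, hk, hk_le⟩ := hsupp t ⟨ht.1, by linarith [ht.2]⟩
    rw [hk, slope_eq_of_supporting_lines hk hkm (hkm_le t (hIoo ⟨ht.1, by linarith [ht.2]⟩))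
      (hk_le _ (hIoo ⟨by linarith, by linarith⟩)) (by nlinarith [ht.2])]
  have hkm_le_kp : km ≤ kp := by
    have := hkp_le (-(α / 2)) (hIoo ⟨by linarith, by linarith⟩)
    have : (km : ℝ) ≤ kp := by nlinarith
    exact_mod_cast this
  rcases hkm_le_kp.lt_or_eq with hlt | heq
  · have hkp_ge : (km : ℝ) + 1 ≤ kp := by exact_mod_cast hlt
    have := hkp_le α ⟨by linarith, le_rfl⟩
    have := hkm_le (-α) ⟨le_rfl, by linarith⟩
    nlinarith
  · refine absurd ⟨-kp, 1, fun t ht => ?_⟩ hna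
    have hline : ∀ s ∈ Ioo (-α) α, g s = 1 - kp * s := by
      intro s hs
      rcases lt_trichotomy s 0 with hs0 | rfl | hs0
      · rw [hleft s ⟨hs.1, hs0⟩, heq]
      · obtain ⟨k, hk, -⟩ := hsupp 0 hs
        simpa using hk
      · exact hright s ⟨hs0, hs.2⟩
    have hlim_t := hlim t ht (1 - kp * t) <|
      ((continuous_const.sub (continuous_const.mul continuous_id)).tendsto t).mono_left
        nhdsWithin_le_nhds |>.congr' (eventually_nhdsWithin_of_forall fun s hs => (hline s hs).symm)
    linarith [hkp_le t ht]

end Segment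

theorem bound_on_sum_at_opposite_points_general
    (d : ℕ) (Box : Set (Fin d → ℝ))
    (j : Fin d) (α : ℝ) (hα : 0 < α)
    (hv : (Pi.single j α : Fin d → ℝ) ∈ Box) (hv' : (-Pi.single j α : Fin d → ℝ) ∈ Box)
    (f : (Fin d → ℝ) → ℝ) (hicpa : IsICPA d Box f) (hht : AtHeightOne d Box f) :
    (f 0 < 1 → f (-Pi.single j α) + f (Pi.single j α) ≤ 1) ∧
    (f 0 = 1 → ¬ (∃ s c : ℝ, ∀ t : ℝ, |t| ≤ α → f (Pi.single j t) = s * t + c) →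
      f (-Pi.single j α) + f (Pi.single j α) ≤ 2 - α) ∧
    (f 0 = 1 → (∃ s c : ℝ, ∀ t : ℝ, |t| ≤ α → f (Pi.single j t) = s * t + c) →
      f (-Pi.single j α) + f (Pi.single j α) = 2) := by
  have hI := hicpa.concaveOn.1.Icc_subset_setOf_single_mem hv hv'
  have hg : ConcaveOn ℝ (Icc (-α) α) fun t => f (Pi.single j t) :=
    (hicpa.concaveOn.comp_linearMap (LinearMap.single ℝ _ j)).subset hI (convex_Icc _ _)
  have h0 : (0 : ℝ) ∈ Icc (-α) α := ⟨by linarith, hα.le⟩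
  rw [← Pi.single_neg, ← Pi.single_zero j]
  refine ⟨fun hlt => ?_, fun h1 hna => ?_, fun h1 ⟨s, c, hsc⟩ => ?_⟩
  · obtain ⟨_, m, habs, -⟩ := hht.restrict_single hI h0
    exact add_le_one_of_lt_one hg hα.le (by simpa using habs) hlt
  · have hna' : ¬∃ s c : ℝ, ∀ t ∈ Icc (-α) α, f (Pi.single j t) = s * t + c :=
      fun ⟨s, c, hsc⟩ => hna ⟨s, c, fun t ht => hsc t (abs_le.mp ht)⟩
    refine add_le_two_sub_of_not_affine hα (fun t ht => ?_) (fun x hx c hc => ?_) hna'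
    · obtain ⟨a, m, habs, hmax⟩ := hht.restrict_single hI (Ioo_subset_Icc_self ht)
      exact ⟨a, supporting_line_of_height_one hg h1 hna' ht habs hmax⟩
    · exact hicpa.le_of_tendsto_single (Ioo_subset_Icc_self.trans hI)
        (by rwa [closure_Ioo (by linarith)]) (hI hx) hc
  · have hc := hsc 0 (by simpa using hα.le)
    rw [hsc α (by rw [abs_of_pos hα]), hsc (-α) (by rw [abs_neg, abs_of_pos hα])]
    linarith

/-- Bounds on `f(-v) + f(v)` for `v = α·e_j` with `±v ∈ Box`, according to whether `f` is
non-integral, integral but non-affine on the segment, or integral and affine. -/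
theorem bound_on_sum_at_opposite_points
    (d : ℕ) (hd : 0 < d) (Box : Set (Fin d → ℝ)) (hlat : IsLatticePolytope d Box)
    (h0 : (0 : Fin d → ℝ) ∈ interior Box)
    (j : Fin d) (α : ℝ) (hα : 0 < α)
    (hv : (Pi.single j α : Fin d → ℝ) ∈ Box) (hv' : (-Pi.single j α : Fin d → ℝ) ∈ Box)
    (f : (Fin d → ℝ) → ℝ) (hicpa : IsICPA d Box f) (hht : AtHeightOne d Box f)
    (hf0 : 0 < f 0) :
    (f 0 < 1 → f (-Pi.single j α) + f (Pi.single j α) ≤ 1) ∧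
    (f 0 = 1 → ¬ (∃ s c : ℝ, ∀ t : ℝ, |t| ≤ α → f (Pi.single j t) = s * t + c) →
      f (-Pi.single j α) + f (Pi.single j α) ≤ 2 - α) ∧
    (f 0 = 1 → (∃ s c : ℝ, ∀ t : ℝ, |t| ≤ α → f (Pi.single j t) = s * t + c) →
      f (-Pi.single j α) + f (Pi.single j α) = 2) :=
  bound_on_sum_at_opposite_points_general d Box j α hα hv hv' f hicpa hht

end
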